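/- arXiv:1409.3346 — 2 statements merged into one kernel-verified Lean document; each statement's English description precedes it below -/
import Mathlib

section
/- For every 1 < p < ∞ there exist constants c = c(p) > 0 and C = C(p) > 0, independent of the dimension and of the matrix, such that for every n ≥ 1, every symmetric positive semidefinite matrix A ∈ ℝ^{n×n}, and all a, b ∈ ℝⁿ: c |b|_A² (|a|_A + |b|_A)^{p−2} ≤ |a+b|_A^p − |a|_A^p − p |a|_A^{p−2} ⟨Aa, b⟩ ≤ C |b|_A² (|a|_A + |b|_A)^{p−2}, where the term |a|_A^{p−2}⟨Aa,b⟩ is interpreted as 0 when |a|_A = 0, and both sides are interpreted as 0 when |a|_A = |b|_A = 0. -/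
open MeasureTheory Matrix Filter Topology

noncomputable section

variable {n : ℕ}

/-- The quadratic form `⟨A ξ, ξ⟩` associated with a matrix `A`. -/
def matQ (A : Matrix (Fin n) (Fin n) ℝ) (ξ : Fin n → ℝ) : ℝ := A.mulVec ξ ⬝ᵥ ξ

/-- `|ξ|_A := ⟨A ξ, ξ⟩^{1/2}`. -/
def matNorm (A : Matrix (Fin n) (Fin n) ℝ) (ξ : Fin n → ℝ) : ℝ := Real.sqrt (matQ A ξ)

/-- The (classical) gradient of `u : ℝⁿ → ℝ`. -/
def grad (u : (Fin n → ℝ) → ℝ) (x : Fin n → ℝ) : Fin n → ℝ :=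
  fun i => fderiv ℝ u x (Pi.single i 1)

/-- `φ ∈ C_c^∞(Ω)`. -/
def IsTest (Ω : Set (Fin n → ℝ)) (φ : (Fin n → ℝ) → ℝ) : Prop :=
  ContDiff ℝ (⊤ : ℕ∞) φ ∧ HasCompactSupport φ ∧ tsupport φ ⊆ Ω

/-- The functional `Q_{A,V}(φ) = ∫_Ω (|∇φ|_A^p + V |φ|^p)`. -/
def QForm (p : ℝ) (Ω : Set (Fin n → ℝ)) (A : (Fin n → ℝ) → Matrix (Fin n) (Fin n) ℝ)
    (V : (Fin n → ℝ) → ℝ) (φ : (Fin n → ℝ) → ℝ) : ℝ :=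
  ∫ x in Ω, (matNorm (A x) (grad φ x) ^ p + V x * |φ x| ^ p)

/-- `A` is symmetric and locally uniformly positive definite in `Ω`. -/
def LocUnifPD (Ω : Set (Fin n → ℝ)) (A : (Fin n → ℝ) → Matrix (Fin n) (Fin n) ℝ) : Prop :=
  (∀ x ∈ Ω, (A x).IsSymm) ∧
  ∀ K : Set (Fin n → ℝ), K ⊆ Ω → IsCompact K →
    ∃ θ > (0:ℝ), ∀ x ∈ K, ∀ ξ : Fin n → ℝ,
      θ * (ξ ⬝ᵥ ξ) ≤ matQ (A x) ξ ∧ matQ (A x) ξ ≤ θ⁻¹ * (ξ ⬝ᵥ ξ)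

/-- `V ∈ L^∞_loc(Ω)` (measurable and locally bounded). -/
def LinfLoc (Ω : Set (Fin n → ℝ)) (V : (Fin n → ℝ) → ℝ) : Prop :=
  Measurable V ∧
  ∀ K : Set (Fin n → ℝ), K ⊆ Ω → IsCompact K → ∃ C : ℝ, ∀ x ∈ K, |V x| ≤ C

/-- `A` is locally `α`-Hölder continuous in `Ω` (entrywise). -/
def LocHolderMat (Ω : Set (Fin n → ℝ)) (A : (Fin n → ℝ) → Matrix (Fin n) (Fin n) ℝ)
    (α : ℝ) : Prop :=
  ∀ K : Set (Fin n → ℝ), K ⊆ Ω → IsCompact K → ∃ C : ℝ, ∀ x ∈ K, ∀ y ∈ K, ∀ i j,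
    |A x i j - A y i j| ≤ C * dist x y ^ α

/-- `v` is a (weak) supersolution of `Q_{A,V}(u) = 0` in `Ω`. -/
def IsSupersolution (p : ℝ) (Ω : Set (Fin n → ℝ))
    (A : (Fin n → ℝ) → Matrix (Fin n) (Fin n) ℝ) (V : (Fin n → ℝ) → ℝ)
    (v : (Fin n → ℝ) → ℝ) : Prop :=
  ∀ φ : (Fin n → ℝ) → ℝ, IsTest Ω φ → (∀ x, 0 ≤ φ x) →
    0 ≤ ∫ x in Ω, (matNorm (A x) (grad v x) ^ (p - 2) *
          ((A x).mulVec (grad v x) ⬝ᵥ grad φ x) + V x * v x ^ (p - 1) * φ x)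

/-- `v` is a (weak) solution of `Q_{A,V}(u) = 0` in `Ω`. -/
def IsSolution (p : ℝ) (Ω : Set (Fin n → ℝ))
    (A : (Fin n → ℝ) → Matrix (Fin n) (Fin n) ℝ) (V : (Fin n → ℝ) → ℝ)
    (v : (Fin n → ℝ) → ℝ) : Prop :=
  ∀ φ : (Fin n → ℝ) → ℝ, IsTest Ω φ →
    (∫ x in Ω, (matNorm (A x) (grad v x) ^ (p - 2) *
        ((A x).mulVec (grad v x) ⬝ᵥ grad φ x) + V x * v x ^ (p - 1) * φ x)) = 0

/-- `ψ` is a (weak) subsolution of `Q_{A,V}(u) = 0` in `Ω`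
(with the term `V |ψ|^{p-2} ψ`). -/
def IsSubsolution (p : ℝ) (Ω : Set (Fin n → ℝ))
    (A : (Fin n → ℝ) → Matrix (Fin n) (Fin n) ℝ) (V : (Fin n → ℝ) → ℝ)
    (ψ : (Fin n → ℝ) → ℝ) : Prop :=
  ∀ φ : (Fin n → ℝ) → ℝ, IsTest Ω φ → (∀ x, 0 ≤ φ x) →
    (∫ x in Ω, (matNorm (A x) (grad ψ x) ^ (p - 2) *
        ((A x).mulVec (grad ψ x) ⬝ᵥ grad φ x) + V x * |ψ x| ^ (p - 2) * ψ x * φ x)) ≤ 0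

/-- The Picone form `L_A(u,v)(x)`. -/
def PiconeL (p : ℝ) (A : (Fin n → ℝ) → Matrix (Fin n) (Fin n) ℝ)
    (u v : (Fin n → ℝ) → ℝ) (x : Fin n → ℝ) : ℝ :=
  matNorm (A x) (grad u x) ^ p
    + (p - 1) * (u x / v x) ^ p * matNorm (A x) (grad v x) ^ p
    - p * (u x / v x) ^ (p - 1) * matNorm (A x) (grad v x) ^ (p - 2)
        * ((A x).mulVec (grad v x) ⬝ᵥ grad u x)

/-- The Picone form `R_A(u,v)(x)`. -/
def PiconeR (p : ℝ) (A : (Fin n → ℝ) → Matrix (Fin n) (Fin n) ℝ)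
    (u v : (Fin n → ℝ) → ℝ) (x : Fin n → ℝ) : ℝ :=
  matNorm (A x) (grad u x) ^ p
    - matNorm (A x) (grad v x) ^ (p - 2)
        * ((A x).mulVec (grad v x) ⬝ᵥ grad (fun y => u y ^ p / v y ^ (p - 1)) x)

/-- The functional `Q_{A,V}` is nonnegative on `C_c^∞(Ω)`. -/
def QNonneg (p : ℝ) (Ω : Set (Fin n → ℝ)) (A : (Fin n → ℝ) → Matrix (Fin n) (Fin n) ℝ)
    (V : (Fin n → ℝ) → ℝ) : Prop :=
  ∀ φ : (Fin n → ℝ) → ℝ, IsTest Ω φ → 0 ≤ QForm p Ω A V φ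

/-- The functional `Q_{A,V}` is subcritical in `Ω`. -/
def QSubcritical (p : ℝ) (Ω : Set (Fin n → ℝ)) (A : (Fin n → ℝ) → Matrix (Fin n) (Fin n) ℝ)
    (V : (Fin n → ℝ) → ℝ) : Prop :=
  ∃ W : (Fin n → ℝ) → ℝ, ContinuousOn W Ω ∧ (∀ x ∈ Ω, 0 ≤ W x) ∧ (∃ x ∈ Ω, W x ≠ 0) ∧
    ∀ φ : (Fin n → ℝ) → ℝ, IsTest Ω φ →
      (∫ x in Ω, W x * |φ x| ^ p) ≤ QForm p Ω A V φ

/-- The functional `Q_{A,V}` is critical in `Ω`. -/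
def QCritical (p : ℝ) (Ω : Set (Fin n → ℝ)) (A : (Fin n → ℝ) → Matrix (Fin n) (Fin n) ℝ)
    (V : (Fin n → ℝ) → ℝ) : Prop :=
  QNonneg p Ω A V ∧ ¬ QSubcritical p Ω A V

/-- The functional `Q_{A,V}` is supercritical in `Ω` (not nonnegative). -/
def QSupercritical (p : ℝ) (Ω : Set (Fin n → ℝ)) (A : (Fin n → ℝ) → Matrix (Fin n) (Fin n) ℝ)
    (V : (Fin n → ℝ) → ℝ) : Prop :=
  ¬ QNonneg p Ω A V

/-- A null sequence for `Q_{A,V}` in `Ω`. -/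
def IsNullSeq (p : ℝ) (Ω : Set (Fin n → ℝ)) (A : (Fin n → ℝ) → Matrix (Fin n) (Fin n) ℝ)
    (V : (Fin n → ℝ) → ℝ) (φs : ℕ → (Fin n → ℝ) → ℝ) : Prop :=
  (∀ k, IsTest Ω (φs k) ∧ ∀ x, 0 ≤ φs k x) ∧
  (∃ B : Set (Fin n → ℝ), IsOpen B ∧ IsCompact (closure B) ∧ closure B ⊆ Ω ∧
      ∀ k, (∫ x in B, |φs k x| ^ p) = 1) ∧
  Tendsto (fun k => QForm p Ω A V (φs k)) atTop (nhds 0)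

/-- A ground state of `Q_{A,V}` in `Ω`: a positive function which is an `L^p_loc` limit of
a null sequence. -/
def IsGroundState (p : ℝ) (Ω : Set (Fin n → ℝ)) (A : (Fin n → ℝ) → Matrix (Fin n) (Fin n) ℝ)
    (V : (Fin n → ℝ) → ℝ) (φ : (Fin n → ℝ) → ℝ) : Prop :=
  (∀ x ∈ Ω, 0 < φ x) ∧
  ∃ φs : ℕ → (Fin n → ℝ) → ℝ, IsNullSeq p Ω A V φs ∧
    ∀ K : Set (Fin n → ℝ), K ⊆ Ω → IsCompact K →
      Tendsto (fun k => ∫ x in K, |φs k x - φ x| ^ p) atTop (nhds 0)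


/-- Entrywise measurability of a matrix-valued map. -/
def MeasurableMat (A : (Fin n → ℝ) → Matrix (Fin n) (Fin n) ℝ) : Prop :=
  ∀ i j, Measurable fun x => A x i j

/-! Write `s = |a|_A`, `t = |b|_A`, `r = ⟨A a, b⟩`, so that `|r| ≤ s t` (Cauchy–Schwarz) and the
middle quantity is `φ(1) - φ(0) - φ'(0)` for `φ(σ) = |a + σ b|_A^p = (s² + 2 r σ + σ² t²)^{p/2}`.
Since `(r + σ t²)² ≤ t² |a + σ b|_A²`, the second derivative `φ''` lies between
`p min(1, p-1) t² |a + σ b|_A^{p-2}` and `p max(1, p-1) t² |a + σ b|_A^{p-2}`.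
If `s > 2t`, then `|a + σ b|_A ≍ s + t` on all of `[0, 1]` and the upper bound is Taylor's formula;
if `s ≤ 2t`, it is crude. For the lower bound, `φ` is convex and `|a + σ b|_A ≍ s + t` on
`[0, 1/4]` (if `s ≥ t/2`) or on `[3/4, 7/8]` (if `s < t/2`), which suffices; the boundary case
`|r| = s t` follows by continuity in `r`. -/

open Set

lemma sq_rpow_half {s : ℝ} (hs : 0 ≤ s) (e : ℝ) : (s ^ 2) ^ (e / 2) = s ^ e := by
  rw [← Real.rpow_natCast, ← Real.rpow_mul hs]
  congr 1
  push_cast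
  ring

lemma rpow_bounds_of_mem_Icc {κ u x : ℝ} (e : ℝ) (hκ : 0 < κ) (hu : 0 < u)
    (hx : x ∈ Icc (κ * u) u) :
    min 1 (κ ^ e) * u ^ e ≤ x ^ e ∧ x ^ e ≤ max 1 (κ ^ e) * u ^ e := by
  have hκu : 0 < κ * u := mul_pos hκ hu
  have hx0 : 0 < x := hκu.trans_le hx.1
  have hue : 0 ≤ u ^ e := Real.rpow_nonneg hu.le e
  have hscale : κ ^ e * u ^ e = (κ * u) ^ e := (Real.mul_rpow hκ.le hu.le).symm
  rcases le_total 0 e with he | he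
  · have hlow := Real.rpow_le_rpow hκu.le hx.1 he
    have hhigh := Real.rpow_le_rpow hx0.le hx.2 he
    constructor
    · nlinarith [min_le_right 1 (κ ^ e)]
    · nlinarith [le_max_left 1 (κ ^ e)]
  · have hlow := Real.rpow_le_rpow_of_nonpos hx0 hx.2 he
    have hhigh := Real.rpow_le_rpow_of_nonpos hκu hx.1 he
    constructor
    · nlinarith [min_le_left 1 (κ ^ e)]
    · nlinarith [le_max_right 1 (κ ^ e)]

lemma rpow_half_sub_one_bounds {p q κ u : ℝ} (hκ : 0 < κ) (hu : 0 < u)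
    (hlow : (κ * u) ^ 2 ≤ q) (hhigh : q ≤ u ^ 2) :
    min 1 (κ ^ (p - 2)) * u ^ (p - 2) ≤ q ^ (p / 2 - 1) ∧
      q ^ (p / 2 - 1) ≤ max 1 (κ ^ (p - 2)) * u ^ (p - 2) := by
  have hq : 0 ≤ q := (sq_nonneg _).trans hlow
  have hroot : √q ∈ Icc (κ * u) u :=
    ⟨(Real.le_sqrt (mul_pos hκ hu).le hq).2 hlow, (Real.sqrt_le_left hu.le).2 hhigh⟩
  rw [show q ^ (p / 2 - 1) = √q ^ (p - 2) by
    rw [Real.sqrt_eq_rpow, ← Real.rpow_mul hq]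
    ring_nf]
  exact rpow_bounds_of_mem_Icc (p - 2) hκ hu hroot

lemma sub_le_sub_of_hasDerivAt_le {f g f' g' : ℝ → ℝ} {a b : ℝ} (hab : a ≤ b)
    (hf : ∀ x ∈ Icc a b, HasDerivAt f (f' x) x) (hg : ∀ x ∈ Icc a b, HasDerivAt g (g' x) x)
    (hle : ∀ x ∈ Icc a b, f' x ≤ g' x) : f b - f a ≤ g b - g a := by
  have hderiv : ∀ x ∈ Icc a b, HasDerivAt (g - f) (g' x - f' x) x :=
    fun x hx => (hg x hx).sub (hf x hx)
  have hmono : MonotoneOn (g - f) (Icc a b) :=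
    monotoneOn_of_hasDerivWithinAt_nonneg (convex_Icc a b)
      (fun x hx => (hderiv x hx).continuousAt.continuousWithinAt)
      (fun x hx => (hderiv x (interior_subset hx)).hasDerivWithinAt)
      (fun x hx => sub_nonneg.2 (hle x (interior_subset hx)))
  have := hmono (left_mem_Icc.2 hab) (right_mem_Icc.2 hab) hab
  simp only [Pi.sub_apply] at this
  linarith

lemma mul_sub_le_sub_of_le_hasDerivAt {f f' : ℝ → ℝ} {a b C : ℝ} (hab : a ≤ b)
    (hf : ∀ x ∈ Icc a b, HasDerivAt f (f' x) x) (hle : ∀ x ∈ Icc a b, C ≤ f' x) :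
    C * (b - a) ≤ f b - f a := by
  have := sub_le_sub_of_hasDerivAt_le (f := fun y => C * y) hab
    (fun y _ => by simpa using (hasDerivAt_id y).const_mul C) hf hle
  linarith

section Taylor

variable {φ φ' φ'' : ℝ → ℝ}

lemma sub_sub_deriv_le_of_deriv2_le {M : ℝ}
    (hφ : ∀ x ∈ Icc (0 : ℝ) 1, HasDerivAt φ (φ' x) x)
    (hφ' : ∀ x ∈ Icc (0 : ℝ) 1, HasDerivAt φ' (φ'' x) x)
    (hM : ∀ x ∈ Icc (0 : ℝ) 1, φ'' x ≤ M) :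
    φ 1 - φ 0 - φ' 0 ≤ M / 2 := by
  have hslope : ∀ x ∈ Icc (0 : ℝ) 1, φ' x ≤ φ' 0 + M * x := by
    intro x hx
    have := sub_le_sub_of_hasDerivAt_le (g := fun y => M * y) hx.1
      (fun y hy => hφ' y ⟨hy.1, hy.2.trans hx.2⟩)
      (fun y _ => (hasDerivAt_id y).const_mul M)
      (fun y hy => by simpa using hM y ⟨hy.1, hy.2.trans hx.2⟩)
    linarith
  have := sub_le_sub_of_hasDerivAt_le (g := fun y => φ' 0 * y + M / 2 * y ^ 2)
    (g' := fun y => φ' 0 + M * y) zero_le_one hφ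
    (fun y _ => by
      have h : HasDerivAt (fun y => φ' 0 * y + M / 2 * y ^ 2)
          (φ' 0 * 1 + M / 2 * ((2 : ℕ) * y ^ (2 - 1))) y :=
        ((hasDerivAt_id' y).const_mul _).add ((hasDerivAt_pow 2 y).const_mul _)
      convert h using 1
      push_cast
      ring)
    hslope
  norm_num at this
  linarith

lemma le_sub_sub_deriv_of_le_deriv2 {m α β : ℝ} (hα : 0 ≤ α) (hαβ : α ≤ β) (hβ : β ≤ 1)
    (hφ : ∀ x ∈ Icc (0 : ℝ) 1, HasDerivAt φ (φ' x) x)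
    (hφ' : ∀ x ∈ Icc (0 : ℝ) 1, HasDerivAt φ' (φ'' x) x)
    (hφ''_nonneg : ∀ x ∈ Icc (0 : ℝ) 1, 0 ≤ φ'' x) (hm : ∀ x ∈ Icc α β, m ≤ φ'' x) :
    (1 - β) * ((β - α) * m) ≤ φ 1 - φ 0 - φ' 0 := by
  have hmono : ∀ x y, 0 ≤ x → x ≤ y → y ≤ 1 → φ' x ≤ φ' y := fun x y hx hxy hy => by
    have := mul_sub_le_sub_of_le_hasDerivAt hxy
      (fun z hz => hφ' z ⟨hx.trans hz.1, hz.2.trans hy⟩)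
      (fun z hz => hφ''_nonneg z ⟨hx.trans hz.1, hz.2.trans hy⟩)
    linarith
  have hgain : (β - α) * m ≤ φ' β - φ' α := by
    rw [mul_comm]
    exact mul_sub_le_sub_of_le_hasDerivAt hαβ
      (fun z hz => hφ' z ⟨hα.trans hz.1, hz.2.trans hβ⟩) hm
  have hhead : φ' 0 * (β - 0) ≤ φ β - φ 0 :=
    mul_sub_le_sub_of_le_hasDerivAt (hα.trans hαβ)
      (fun z hz => hφ z ⟨hz.1, hz.2.trans hβ⟩)
      (fun z hz => hmono 0 z le_rfl hz.1 (hz.2.trans hβ))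
  have htail : (φ' 0 + (β - α) * m) * (1 - β) ≤ φ 1 - φ β :=
    mul_sub_le_sub_of_le_hasDerivAt hβ
      (fun z hz => hφ z ⟨(hα.trans hαβ).trans hz.1, hz.2⟩)
      (fun z hz => by
        have := hmono 0 α le_rfl hα (hαβ.trans hβ)
        have := hmono β z (hα.trans hαβ) hz.1 hz.2
        linarith)
  nlinarith

end Taylor

/-- `|a + σ b|²` for vectors with `|a| = s`, `|b| = t` and `⟨a, b⟩ = r`. -/
def lineSq (s t r σ : ℝ) : ℝ := s ^ 2 + 2 * r * σ + σ ^ 2 * t ^ 2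

def linePowDeriv (p s t r σ : ℝ) : ℝ := p * (r + σ * t ^ 2) * lineSq s t r σ ^ (p / 2 - 1)

def linePowDeriv2 (p s t r σ : ℝ) : ℝ :=
  p * lineSq s t r σ ^ (p / 2 - 2) * (t ^ 2 * lineSq s t r σ + (p - 2) * (r + σ * t ^ 2) ^ 2)

section Line

variable {p s t r σ : ℝ}

lemma hasDerivAt_lineSq : HasDerivAt (lineSq s t r) (2 * (r + σ * t ^ 2)) σ := by
  have h : HasDerivAt (lineSq s t r) (0 + 2 * r * 1 + (2 : ℕ) * σ ^ (2 - 1) * t ^ 2) σ :=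
    ((hasDerivAt_const σ _).add ((hasDerivAt_id' σ).const_mul _)).add
      ((hasDerivAt_pow 2 σ).mul_const _)
  convert h using 1
  push_cast
  ring

lemma hasDerivAt_lineSq_rpow (hq : 0 < lineSq s t r σ) :
    HasDerivAt (fun σ => lineSq s t r σ ^ (p / 2)) (linePowDeriv p s t r σ) σ := by
  convert hasDerivAt_lineSq.rpow_const (p := p / 2) (Or.inl hq.ne') using 1
  rw [linePowDeriv]
  ring

lemma hasDerivAt_linePowDeriv (hq : 0 < lineSq s t r σ) :
    HasDerivAt (linePowDeriv p s t r) (linePowDeriv2 p s t r σ) σ := by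
  have hlin : HasDerivAt (fun σ => p * (r + σ * t ^ 2)) (p * (1 * t ^ 2)) σ :=
    (((hasDerivAt_id' σ).mul_const _).const_add r).const_mul p
  have hpow := hasDerivAt_lineSq (s := s) (t := t) (r := r) (σ := σ) |>.rpow_const
    (p := p / 2 - 1) (Or.inl hq.ne')
  have h : HasDerivAt (linePowDeriv p s t r) (p * (1 * t ^ 2) * lineSq s t r σ ^ (p / 2 - 1) +
      p * (r + σ * t ^ 2) * (2 * (r + σ * t ^ 2) * (p / 2 - 1) *
        lineSq s t r σ ^ (p / 2 - 1 - 1))) σ := hlin.mul hpow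
  convert h using 1
  rw [linePowDeriv2, show p / 2 - 1 - 1 = p / 2 - 2 by ring,
    show p / 2 - 1 = p / 2 - 2 + 1 by ring, Real.rpow_add_one hq.ne']
  ring

lemma sq_le_mul_lineSq (hr : |r| ≤ s * t) : (r + σ * t ^ 2) ^ 2 ≤ t ^ 2 * lineSq s t r σ := by
  have : r ^ 2 ≤ (s * t) ^ 2 := sq_le_sq' (abs_le.1 hr).1 (abs_le.1 hr).2
  nlinarith [show (r + σ * t ^ 2) ^ 2 - t ^ 2 * lineSq s t r σ = r ^ 2 - (s * t) ^ 2 by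
    rw [lineSq]; ring]

lemma linePowDeriv2_bounds (hp : 1 < p) (hr : |r| ≤ s * t) (hq : 0 < lineSq s t r σ) :
    p * min 1 (p - 1) * t ^ 2 * lineSq s t r σ ^ (p / 2 - 1) ≤ linePowDeriv2 p s t r σ ∧
      linePowDeriv2 p s t r σ ≤ p * max 1 (p - 1) * t ^ 2 * lineSq s t r σ ^ (p / 2 - 1) := by
  set q := lineSq s t r σ
  have hsplit : q ^ (p / 2 - 1) = q ^ (p / 2 - 2) * q := by
    rw [← Real.rpow_add_one hq.ne']
    ring_nf
  have hρ := sq_le_mul_lineSq (σ := σ) hr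
  have hw : 0 ≤ p * q ^ (p / 2 - 2) := mul_nonneg (by linarith) (Real.rpow_nonneg hq.le _)
  have hρ0 := sq_nonneg (r + σ * t ^ 2)
  suffices min 1 (p - 1) * (t ^ 2 * q) ≤ t ^ 2 * q + (p - 2) * (r + σ * t ^ 2) ^ 2 ∧
      t ^ 2 * q + (p - 2) * (r + σ * t ^ 2) ^ 2 ≤ max 1 (p - 1) * (t ^ 2 * q) by
    rw [linePowDeriv2, hsplit]
    constructor
    · nlinarith [mul_le_mul_of_nonneg_left this.1 hw]
    · nlinarith [mul_le_mul_of_nonneg_left this.2 hw]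
  rcases le_total 2 p with h2p | hp2
  · rw [min_eq_left (by linarith), max_eq_right (by linarith)]
    constructor <;> nlinarith
  · rw [min_eq_right (by linarith), max_eq_left (by linarith)]
    constructor <;> nlinarith

lemma lineSq_le_sq (hs : 0 ≤ s) (ht : 0 ≤ t) (hr : |r| ≤ s * t) (hσ : σ ∈ Icc (0 : ℝ) 1) :
    lineSq s t r σ ≤ (s + t) ^ 2 := by
  have := (abs_le.1 hr).2
  have : σ ^ 2 ≤ σ := by nlinarith [hσ.1, hσ.2]
  rw [lineSq]
  nlinarith [hσ.1, hσ.2, mul_nonneg hs ht, sq_nonneg t]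

lemma sq_sub_le_lineSq (hr : -(s * t) ≤ r) (hσ : 0 ≤ σ) : (s - σ * t) ^ 2 ≤ lineSq s t r σ := by
  rw [lineSq]
  nlinarith

lemma lineSq_pos (hs : 0 < s) (hr : -(s * t) < r) (hσ : 0 ≤ σ) : 0 < lineSq s t r σ := by
  have hform : lineSq s t r σ = (s - σ * t) ^ 2 + 2 * σ * (r + s * t) := by rw [lineSq]; ring
  rcases hσ.eq_or_lt with rfl | hσ
  · rw [hform]; nlinarith
  · rw [hform]; nlinarith [sq_nonneg (s - σ * t)]

end Line

/-- `|a + b|^p - |a|^p - p |a|^(p-2) ⟨a, b⟩` for vectors with `|a| = s`, `|b| = t` and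
`⟨a, b⟩ = r`. -/
def excess (p s t r : ℝ) : ℝ := (s ^ 2 + 2 * r + t ^ 2) ^ (p / 2) - s ^ p - p * s ^ (p - 2) * r

section Excess

variable {p s t r : ℝ}

lemma excess_eq_lineSq (hs : 0 ≤ s) :
    excess p s t r =
      lineSq s t r 1 ^ (p / 2) - lineSq s t r 0 ^ (p / 2) - linePowDeriv p s t r 0 := by
  have h0 : lineSq s t r 0 = s ^ 2 := by rw [lineSq]; ring
  have h1 : lineSq s t r 1 = s ^ 2 + 2 * r + t ^ 2 := by rw [lineSq]; ring
  rw [excess, linePowDeriv, h0, h1, sq_rpow_half hs, show p / 2 - 1 = (p - 2) / 2 by ring,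
    sq_rpow_half hs]
  ring

lemma continuous_excess (hp : 0 < p) : Continuous (excess p s t) := by
  have hbase : Continuous fun r => (s ^ 2 + 2 * r + t ^ 2) ^ (p / 2) :=
    (by fun_prop : Continuous fun r : ℝ => s ^ 2 + 2 * r + t ^ 2).rpow_const
      fun _ => Or.inr (by positivity)
  exact (hbase.sub continuous_const).sub (continuous_const.mul continuous_id)
lemma excess_le_of_le_two_mul (hp : 1 < p) (hs : 0 ≤ s) (hr : |r| ≤ s * t) (hst : s ≤ 2 * t) :
    excess p s t r ≤ (9 + 3 * p) * (t ^ 2 * (s + t) ^ (p - 2)) := by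
  have ht : 0 ≤ t := by linarith
  have hu : 0 ≤ s + t := add_nonneg hs ht
  have hr' := abs_le.1 hr
  have hE : 0 ≤ (s + t) ^ (p - 2) := Real.rpow_nonneg hu _
  have hsplit : ∀ x : ℝ, 0 ≤ x → ∀ e : ℝ, e + (p - 2) ≠ 0 →
      x ^ (e + (p - 2)) = x ^ e * x ^ (p - 2) :=
    fun x hx e he => Real.rpow_add' hx he
  have hmain : (s ^ 2 + 2 * r + t ^ 2) ^ (p / 2) ≤ 9 * (t ^ 2 * (s + t) ^ (p - 2)) := by
    have hq : (s ^ 2 + 2 * r + t ^ 2) ^ (p / 2) ≤ (s + t) ^ p := by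
      rw [← sq_rpow_half hu p]
      exact Real.rpow_le_rpow (by nlinarith [sq_nonneg (s - t)]) (by nlinarith) (by linarith)
    have h := hsplit (s + t) hu 2 (by linarith)
    rw [show (2 : ℝ) + (p - 2) = p by ring, Real.rpow_two] at h
    rw [h] at hq
    nlinarith [mul_le_mul_of_nonneg_right (show (s + t) ^ 2 ≤ 9 * t ^ 2 by nlinarith) hE]
  have hlin : -(p * s ^ (p - 2) * r) ≤ 3 * p * (t ^ 2 * (s + t) ^ (p - 2)) := by
    have hs1 := hsplit s hs 1 (by linarith)
    have hu1 := hsplit (s + t) hu 1 (by linarith)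
    rw [show (1 : ℝ) + (p - 2) = p - 1 by ring, Real.rpow_one] at hs1 hu1
    have hmono : s ^ (p - 1) ≤ (s + t) ^ (p - 1) :=
      Real.rpow_le_rpow hs (by linarith) (by linarith)
    have hsE : 0 ≤ s ^ (p - 2) := Real.rpow_nonneg hs _
    have hp0 : 0 ≤ p := by linarith
    calc -(p * s ^ (p - 2) * r) ≤ p * s ^ (p - 2) * (s * t) :=
          by nlinarith [mul_le_mul_of_nonneg_left hr'.1 (mul_nonneg hp0 hsE)]
      _ = p * t * s ^ (p - 1) := by rw [hs1]; ring
      _ ≤ p * t * ((s + t) * (s + t) ^ (p - 2)) := by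
          rw [← hu1]; exact mul_le_mul_of_nonneg_left hmono (mul_nonneg hp0 ht)
      _ ≤ p * t * ((3 * t) * (s + t) ^ (p - 2)) :=
          mul_le_mul_of_nonneg_left (mul_le_mul_of_nonneg_right (by linarith) hE)
            (mul_nonneg hp0 ht)
      _ = 3 * p * (t ^ 2 * (s + t) ^ (p - 2)) := by ring
  have hsp : 0 ≤ s ^ p := Real.rpow_nonneg hs p
  rw [excess]
  linarith

lemma excess_le_of_two_mul_lt (hp : 1 < p) (ht : 0 ≤ t) (hr : |r| ≤ s * t) (hts : 2 * t < s) :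
    excess p s t r ≤
      p * max 1 (p - 1) * max 1 ((1 / 3) ^ (p - 2)) / 2 * (t ^ 2 * (s + t) ^ (p - 2)) := by
  have hs : 0 < s := by linarith
  have hu : 0 < s + t := by linarith
  have hq : ∀ σ ∈ Icc (0 : ℝ) 1, (1 / 3 * (s + t)) ^ 2 ≤ lineSq s t r σ ∧
      lineSq s t r σ ≤ (s + t) ^ 2 := fun σ hσ =>
    ⟨(pow_le_pow_left₀ (by positivity) (by nlinarith [hσ.2]) 2).trans
        (sq_sub_le_lineSq (abs_le.1 hr).1 hσ.1),
      lineSq_le_sq hs.le ht hr hσ⟩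
  have hq0 : ∀ σ ∈ Icc (0 : ℝ) 1, 0 < lineSq s t r σ := fun σ hσ =>
    lt_of_lt_of_le (by positivity) (hq σ hσ).1
  rw [excess_eq_lineSq hs.le, show ∀ M : ℝ, M / 2 * (t ^ 2 * (s + t) ^ (p - 2)) =
    M * t ^ 2 * (s + t) ^ (p - 2) / 2 by intro M; ring]
  refine sub_sub_deriv_le_of_deriv2_le (φ' := linePowDeriv p s t r)
    (fun σ hσ => hasDerivAt_lineSq_rpow (hq0 σ hσ))
    (fun σ hσ => hasDerivAt_linePowDeriv (hq0 σ hσ)) (fun σ hσ => ?_)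
  have hpow := (rpow_half_sub_one_bounds (p := p) (by norm_num) hu (hq σ hσ).1 (hq σ hσ).2).2
  have hw : 0 ≤ p * max 1 (p - 1) * t ^ 2 :=
    mul_nonneg (mul_nonneg (by linarith) (le_max_of_le_left zero_le_one)) (sq_nonneg t)
  calc linePowDeriv2 p s t r σ
      ≤ p * max 1 (p - 1) * t ^ 2 * lineSq s t r σ ^ (p / 2 - 1) :=
        (linePowDeriv2_bounds hp hr (hq0 σ hσ)).2
    _ ≤ p * max 1 (p - 1) * t ^ 2 * (max 1 ((1 / 3) ^ (p - 2)) * (s + t) ^ (p - 2)) :=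
        mul_le_mul_of_nonneg_left hpow hw
    _ = _ := by ring

lemma mul_le_excess_of_le_abs_sub (hp : 1 < p) (hs : 0 < s) (ht : 0 < t) (hr : |r| < s * t)
    {α β : ℝ} (hα : 0 ≤ α) (hαβ : α ≤ β) (hβ : β ≤ 1)
    (hfar : ∀ σ ∈ Icc α β, (s + t) / 6 ≤ |s - σ * t|) :
    (1 - β) * ((β - α) *
      (p * min 1 (p - 1) * t ^ 2 * (min 1 ((1 / 6) ^ (p - 2)) * (s + t) ^ (p - 2)))) ≤
      excess p s t r := by
  have hu : 0 < s + t := by linarith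
  have hr' := abs_lt.1 hr
  have hq0 : ∀ σ ∈ Icc (0 : ℝ) 1, 0 < lineSq s t r σ := fun σ hσ => lineSq_pos hs hr'.1 hσ.1
  have hw : 0 ≤ p * min 1 (p - 1) * t ^ 2 :=
    mul_nonneg (mul_nonneg (by linarith) (le_min zero_le_one (by linarith))) (sq_nonneg t)
  have hφ'' : ∀ σ ∈ Icc (0 : ℝ) 1,
      p * min 1 (p - 1) * t ^ 2 * lineSq s t r σ ^ (p / 2 - 1) ≤ linePowDeriv2 p s t r σ :=
    fun σ hσ => (linePowDeriv2_bounds hp hr.le (hq0 σ hσ)).1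
  rw [excess_eq_lineSq hs.le]
  refine le_sub_sub_deriv_of_le_deriv2 hα hαβ hβ
    (fun σ hσ => hasDerivAt_lineSq_rpow (hq0 σ hσ))
    (fun σ hσ => hasDerivAt_linePowDeriv (hq0 σ hσ))
    (fun σ hσ => (mul_nonneg hw (Real.rpow_nonneg (hq0 σ hσ).le _)).trans (hφ'' σ hσ))
    fun σ hσ => ?_
  have hσ1 : σ ∈ Icc (0 : ℝ) 1 := ⟨hα.trans hσ.1, hσ.2.trans hβ⟩
  have hlow : (1 / 6 * (s + t)) ^ 2 ≤ lineSq s t r σ := by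
    refine (pow_le_pow_left₀ (by positivity) ?_ 2).trans
      ((sq_abs _).le.trans (sq_sub_le_lineSq hr'.1.le hσ1.1))
    linarith [hfar σ hσ]
  have hpow := (rpow_half_sub_one_bounds (p := p) (by norm_num) hu hlow
    (lineSq_le_sq hs.le ht.le hr.le hσ1)).1
  exact (mul_le_mul_of_nonneg_left hpow hw).trans (hφ'' σ hσ1)

lemma le_excess_of_abs_lt (hp : 1 < p) (hs : 0 < s) (ht : 0 < t) (hr : |r| < s * t) :
    p * min 1 (p - 1) * min 1 ((1 / 6) ^ (p - 2)) / 64 * (t ^ 2 * (s + t) ^ (p - 2)) ≤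
      excess p s t r := by
  have hm : 0 ≤ p * min 1 (p - 1) * t ^ 2 * (min 1 ((1 / 6) ^ (p - 2)) * (s + t) ^ (p - 2)) :=
    mul_nonneg (mul_nonneg (mul_nonneg (by linarith) (le_min zero_le_one (by linarith)))
      (sq_nonneg t)) (mul_nonneg (le_min zero_le_one (Real.rpow_nonneg (by norm_num) _))
        (Real.rpow_nonneg (by positivity) _))
  rcases le_or_gt (t / 2) s with hts | hst
  · refine le_trans ?_ (mul_le_excess_of_le_abs_sub hp hs ht hr le_rfl
      (by norm_num : (0 : ℝ) ≤ 1 / 4) (by norm_num) fun σ hσ => ?_)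
    · linarith
    · exact le_trans (show (s + t) / 6 ≤ s - σ * t by nlinarith [hσ.1, hσ.2]) (le_abs_self _)
  · refine le_trans ?_ (mul_le_excess_of_le_abs_sub hp hs ht hr
      (by norm_num : (0 : ℝ) ≤ 3 / 4) (by norm_num : (3 / 4 : ℝ) ≤ 7 / 8) (by norm_num)
      fun σ hσ => ?_)
    · linarith
    · exact le_trans (show (s + t) / 6 ≤ -(s - σ * t) by nlinarith [hσ.1, hσ.2]) (neg_le_abs _)

lemma exists_excess_le_mul (hp : 1 < p) : ∃ C > 0, ∀ s t r : ℝ, 0 ≤ s → 0 ≤ t → |r| ≤ s * t →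
    excess p s t r ≤ C * (t ^ 2 * (s + t) ^ (p - 2)) := by
  refine ⟨max (9 + 3 * p) (p * max 1 (p - 1) * max 1 ((1 / 3) ^ (p - 2)) / 2),
    lt_max_of_lt_left (by linarith), fun s t r hs ht hr => ?_⟩
  have hX : 0 ≤ t ^ 2 * (s + t) ^ (p - 2) :=
    mul_nonneg (sq_nonneg t) (Real.rpow_nonneg (add_nonneg hs ht) _)
  rcases le_or_gt s (2 * t) with hst | hts
  · exact (excess_le_of_le_two_mul hp hs hr hst).trans
      (mul_le_mul_of_nonneg_right (le_max_left _ _) hX)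
  · exact (excess_le_of_two_mul_lt hp ht hr hts).trans
      (mul_le_mul_of_nonneg_right (le_max_right _ _) hX)

lemma exists_mul_le_excess (hp : 1 < p) : ∃ c > 0, ∀ s t r : ℝ, 0 ≤ s → 0 ≤ t → |r| ≤ s * t →
    c * (t ^ 2 * (s + t) ^ (p - 2)) ≤ excess p s t r := by
  set c₀ := p * min 1 (p - 1) * min 1 ((1 / 6) ^ (p - 2)) / 64
  have hc₀ : 0 < c₀ := by
    have := lt_min one_pos (sub_pos.2 hp)
    have := lt_min one_pos (Real.rpow_pos_of_pos (by norm_num : (0 : ℝ) < 1 / 6) (p - 2))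
    positivity
  refine ⟨min 1 c₀, lt_min one_pos hc₀, fun s t r hs ht hr => ?_⟩
  rcases ht.eq_or_lt with rfl | ht
  · have hr0 : r = 0 := by simpa using hr
    subst hr0
    simp [excess, sq_rpow_half hs]
  rcases hs.eq_or_lt with rfl | hs
  · have hr0 : r = 0 := by simpa using hr
    subst hr0
    have htp : t ^ 2 * t ^ (p - 2) = t ^ p := by
      rw [← Real.rpow_two, ← Real.rpow_add ht]
      ring_nf
    have hexc : excess p 0 t 0 = t ^ p := by
      simp [excess, sq_rpow_half ht.le, Real.zero_rpow (by linarith : p ≠ 0)]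
    rw [hexc, zero_add, htp]
    nlinarith [min_le_left 1 c₀, Real.rpow_nonneg ht.le p]
  -- The bound holds for `|r| < s t`, hence on the closure `|r| ≤ s t`.
  have hclosed : IsClosed {r | min 1 c₀ * (t ^ 2 * (s + t) ^ (p - 2)) ≤ excess p s t r} :=
    isClosed_le continuous_const (continuous_excess (by linarith))
  have hopen : Ioo (-(s * t)) (s * t) ⊆
      {r | min 1 c₀ * (t ^ 2 * (s + t) ^ (p - 2)) ≤ excess p s t r} := fun r hr' =>
    le_trans (mul_le_mul_of_nonneg_right (min_le_right _ _)
        (mul_nonneg (sq_nonneg t) (Real.rpow_nonneg (by positivity) _)))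
      (le_excess_of_abs_lt hp hs ht (abs_lt.2 hr'))
  have hst : -(s * t) ≠ s * t := by nlinarith [mul_pos hs ht]
  exact hclosed.closure_subset_iff.2 hopen (by rw [closure_Ioo hst]; exact abs_le.1 hr)

end Excess

section QuadraticForm

variable {A : Matrix (Fin n) (Fin n) ℝ}

lemma matQ_nonneg (hA : A.PosSemidef) (ξ : Fin n → ℝ) : 0 ≤ matQ A ξ := by
  simpa [matQ, dotProduct_comm] using hA.dotProduct_mulVec_nonneg ξ

lemma matQ_add_smul (hA : A.IsSymm) (a b : Fin n → ℝ) (x : ℝ) :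
    matQ A (a + x • b) = matQ A a + 2 * x * (A *ᵥ a ⬝ᵥ b) + x ^ 2 * matQ A b := by
  have hcross : A *ᵥ b ⬝ᵥ a = A *ᵥ a ⬝ᵥ b := by
    rw [dotProduct_comm, ← dotProduct_transpose_mulVec, hA.eq, dotProduct_comm]
  simp only [matQ, mulVec_add, mulVec_smul, add_dotProduct, dotProduct_add, smul_dotProduct,
    dotProduct_smul, smul_eq_mul, hcross]
  ring

lemma abs_mulVec_dotProduct_le (hA : A.PosSemidef) (a b : Fin n → ℝ) :
    |A *ᵥ a ⬝ᵥ b| ≤ matNorm A a * matNorm A b := by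
  have hsymm : A.IsSymm := isHermitian_iff_isSymm.1 hA.1
  -- `x ↦ |a + x b|_A²` is a nonnegative quadratic, so its discriminant is `≤ 0`.
  have hdisc := discrim_le_zero (a := matQ A b) (b := 2 * (A *ᵥ a ⬝ᵥ b)) (c := matQ A a)
    fun x => by
      have := matQ_nonneg hA (a + x • b)
      rw [matQ_add_smul hsymm] at this
      linarith
  rw [discrim] at hdisc
  rw [matNorm, matNorm, ← Real.sqrt_mul (matQ_nonneg hA a)]
  exact Real.abs_le_sqrt (by nlinarith)

lemma matNorm_add_rpow (hA : A.PosSemidef) (a b : Fin n → ℝ) (p : ℝ) :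
    matNorm A (a + b) ^ p =
      (matNorm A a ^ 2 + 2 * (A *ᵥ a ⬝ᵥ b) + matNorm A b ^ 2) ^ (p / 2) := by
  have hsq : ∀ ξ, matNorm A ξ ^ 2 = matQ A ξ := fun ξ => Real.sq_sqrt (matQ_nonneg hA ξ)
  have hadd := matQ_add_smul (isHermitian_iff_isSymm.1 hA.1) a b 1
  rw [one_smul] at hadd
  rw [← sq_rpow_half (s := matNorm A (a + b)) (Real.sqrt_nonneg _) p, hsq, hsq, hsq, hadd]
  ring_nf

end QuadraticForm

/-- The key algebraic estimate behind the simplified energy: for every `1 < p < ∞` there are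
constants `c, C > 0` (depending only on `p`) such that for every dimension `n ≥ 1`, every
symmetric positive semidefinite matrix `A` and all vectors `a, b`,
`c |b|_A² (|a|_A + |b|_A)^{p−2} ≤ |a+b|_A^p − |a|_A^p − p|a|_A^{p−2}⟨Aa,b⟩
  ≤ C |b|_A² (|a|_A + |b|_A)^{p−2}`. -/
theorem energy_equivalence_estimate (p : ℝ) (hp : 1 < p) :
    ∃ c > (0:ℝ), ∃ C > (0:ℝ), ∀ n : ℕ, 1 ≤ n →
      ∀ A : Matrix (Fin n) (Fin n) ℝ, A.PosSemidef →
        ∀ a b : Fin n → ℝ,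
          c * (matNorm A b ^ 2 * (matNorm A a + matNorm A b) ^ (p - 2)) ≤
              matNorm A (a + b) ^ p - matNorm A a ^ p -
                p * matNorm A a ^ (p - 2) * (A.mulVec a ⬝ᵥ b) ∧
          matNorm A (a + b) ^ p - matNorm A a ^ p -
              p * matNorm A a ^ (p - 2) * (A.mulVec a ⬝ᵥ b) ≤
            C * (matNorm A b ^ 2 * (matNorm A a + matNorm A b) ^ (p - 2)) := by
  obtain ⟨c, hc, hlower⟩ := exists_mul_le_excess hp
  obtain ⟨C, hC, hupper⟩ := exists_excess_le_mul hp
  refine ⟨c, hc, C, hC, fun n _ A hA a b => ?_⟩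
  have hs := Real.sqrt_nonneg (matQ A a)
  have ht := Real.sqrt_nonneg (matQ A b)
  have hr := abs_mulVec_dotProduct_le hA a b
  rw [matNorm_add_rpow hA]
  exact ⟨hlower _ _ _ hs ht hr, hupper _ _ _ hs ht hr⟩

end
end

section
/- Let Ω ⊆ ℝⁿ be a domain, A : Ω → ℝ^{n×n} symmetric, measurable and locally uniformly positive definite, and V ∈ L^∞_loc(Ω). For a nonempty open set B compactly contained in Ω, let c_B := inf { Q_{A,V}(φ) : φ ∈ C_c^∞(Ω), ∫_B |φ|^p dx = 1 }. If c_B > 0 for every nonempty open set B compactly contained in Ω, then there exists a continuous positive function W on Ω such that Q_{A,V}(φ) ≥ ∫_Ω W(x)|φ(x)|^p dx for every φ ∈ C_c^∞(Ω). -/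
open MeasureTheory Matrix Filter Topology

noncomputable section

variable {n : ℕ}

/-!
By `p`-homogeneity of `Q_{A,V}`, `c_B > 0` amounts to `c_B ∫_B |φ|^p ≤ Q_{A,V}(φ)` for every test
function `φ`; in particular `Q_{A,V} ≥ 0`. Cover `Ω` by countably many balls `B_z ⋐ Ω`, pick weights
`ε_z > 0` with `∑ ε_z ≤ 1` and continuous tents `0 ≤ χ_z ≤ 1` positive exactly on `B_z`. Then
`W = ∑ ε_z min(1, c_{B_z}) χ_z` is continuous and positive on `Ω`, and
`∫_Ω W |φ|^p ≤ ∑ ε_z c_{B_z} ∫_{B_z} |φ|^p ≤ ∑ ε_z Q_{A,V}(φ) ≤ Q_{A,V}(φ)`.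
-/

open Metric Set

section Tent

variable {E : Type*} [PseudoMetricSpace E]

def tent (z : E) (r : ℝ) (x : E) : ℝ := max 0 (1 - dist x z / r)

lemma continuous_tent (z : E) (r : ℝ) : Continuous (tent z r) := by
  unfold tent; fun_prop

lemma tent_nonneg (z : E) (r : ℝ) (x : E) : 0 ≤ tent z r x := le_max_left _ _

lemma tent_le_one (z : E) {r : ℝ} (hr : 0 < r) (x : E) : tent z r x ≤ 1 :=
  max_le zero_le_one (sub_le_self _ (div_nonneg dist_nonneg hr.le))

lemma tent_eq_zero_of_notMem_ball {z x : E} {r : ℝ} (hr : 0 < r) (hx : x ∉ ball z r) :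
    tent z r x = 0 := by
  have : 1 ≤ dist x z / r := (one_le_div hr).2 (not_lt.1 hx)
  exact max_eq_left (by linarith)

lemma tent_pos_of_mem_ball {z x : E} {r : ℝ} (hx : x ∈ ball z r) : 0 < tent z r x := by
  have hr : 0 < r := pos_of_mem_ball hx
  have : dist x z / r < 1 := (div_lt_one hr).2 hx
  exact lt_max_of_lt_right (by linarith)

lemma continuous_tsum_mul_tent {ι : Type*} {z : ι → E} {r : ι → ℝ} (hr : ∀ i, 0 < r i)
    {w : ι → ℝ} (hw : Summable w) : Continuous fun x => ∑' i, w i * tent (z i) (r i) x :=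
  continuous_tsum (fun i => continuous_const.mul (continuous_tent _ _)) hw.norm fun i x => by
    rw [norm_mul, Real.norm_of_nonneg (tent_nonneg _ _ _)]
    exact mul_le_of_le_one_right (norm_nonneg _) (tent_le_one _ (hr i) x)

lemma tsum_mul_tent_pos {ι : Type*} {z : ι → E} {r : ι → ℝ} (hr : ∀ i, 0 < r i)
    {w : ι → ℝ} (hw : Summable w) (hw0 : ∀ i, 0 < w i) {x : E}
    (hx : x ∈ ⋃ i, ball (z i) (r i)) : 0 < ∑' i, w i * tent (z i) (r i) x := by
  obtain ⟨j, hj⟩ := mem_iUnion.1 hx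
  have hterm_nonneg i : 0 ≤ w i * tent (z i) (r i) x := mul_nonneg (hw0 i).le (tent_nonneg _ _ _)
  refine Summable.tsum_pos ?_ hterm_nonneg j (mul_pos (hw0 j) (tent_pos_of_mem_ball hj))
  exact hw.of_nonneg_of_le hterm_nonneg fun i =>
    mul_le_of_le_one_right (hw0 i).le (tent_le_one _ (hr i) x)

lemma setIntegral_tent_mul_le [MeasurableSpace E] {μ : Measure E} {Ω : Set E}
    (hΩ : MeasurableSet Ω) {z : E} {r : ℝ} (hr : 0 < r) (hB : ball z r ⊆ Ω) {f : E → ℝ}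
    (hf0 : 0 ≤ f) (hf : IntegrableOn f (ball z r) μ) :
    ∫ x in Ω, tent z r x * f x ∂μ ≤ ∫ x in ball z r, f x ∂μ := by
  rw [setIntegral_eq_of_subset_of_forall_sdiff_eq_zero hΩ hB fun x hx => by
    rw [tent_eq_zero_of_notMem_ball hr hx.2, zero_mul]]
  exact integral_mono_of_nonneg (ae_of_all _ fun x => mul_nonneg (tent_nonneg _ _ _) (hf0 x)) hf
    (ae_of_all _ fun x => mul_le_of_le_one_left (hf0 x) (tent_le_one z hr x))

end Tent

lemma exists_ball_isCompact_closure_subset {E : Type*} [MetricSpace E] [ProperSpace E]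
    {U : Set E} {x : E} (hU : U ∈ 𝓝 x) :
    ∃ r > 0, IsCompact (closure (ball x r)) ∧ closure (ball x r) ⊆ U := by
  obtain ⟨r, hr, hrU⟩ := nhds_basis_closedBall.mem_iff.1 hU
  exact ⟨r, hr, (isCompact_closedBall x r).closure_of_subset ball_subset_closedBall,
    closure_ball_subset_closedBall.trans hrU⟩

lemma IsOpen.exists_countable_ball_cover {E : Type*} [MetricSpace E] [ProperSpace E]
    {Ω : Set E} (hΩ : IsOpen Ω) :
    ∃ T : Set E, T.Countable ∧ ∃ r : E → ℝ,
      (∀ z ∈ T, 0 < r z ∧ IsCompact (closure (ball z (r z))) ∧ closure (ball z (r z)) ⊆ Ω) ∧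
      Ω ⊆ ⋃ z ∈ T, ball z (r z) := by
  choose! r hr hrc hrΩ using fun x (hx : x ∈ Ω) =>
    exists_ball_isCompact_closure_subset (hΩ.mem_nhds hx)
  obtain ⟨T, hTΩ, hT, hcover⟩ :=
    TopologicalSpace.isOpen_biUnion_countable Ω (fun z => ball z (r z)) fun _ _ => isOpen_ball
  refine ⟨T, hT, r, fun z hz => ⟨hr z (hTΩ hz), hrc z (hTΩ hz), hrΩ z (hTΩ hz)⟩, ?_⟩
  rw [hcover]
  exact fun x hx => mem_biUnion hx (mem_ball_self (hr x hx))

lemma integral_tsum_mul {α ι : Type*} [MeasurableSpace α] [Countable ι] {μ : Measure α}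
    {f : α → ℝ} (hf : Integrable f μ) {χ : ι → α → ℝ} (hχ : ∀ i, AEStronglyMeasurable (χ i) μ)
    (hχ1 : ∀ i x, ‖χ i x‖ ≤ 1) {w : ι → ℝ} (hw : Summable w) :
    ∫ x, (∑' i, w i * χ i x) * f x ∂μ = ∑' i, w i * ∫ x, χ i x * f x ∂μ := by
  have hint i : Integrable (fun x => χ i x * f x) μ := hf.bdd_mul (hχ i) (ae_of_all _ (hχ1 i))
  have hnorm i : ∫ x, ‖w i * (χ i x * f x)‖ ∂μ ≤ ‖w i‖ * ∫ x, ‖f x‖ ∂μ := by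
    simp_rw [norm_mul (w i), integral_const_mul]
    refine mul_le_mul_of_nonneg_left (integral_mono (hint i).norm hf.norm fun x => ?_)
      (norm_nonneg _)
    simpa only [norm_mul] using mul_le_of_le_one_left (norm_nonneg (f x)) (hχ1 i x)
  have := integral_tsum_of_summable_integral_norm (F := fun i x => w i * (χ i x * f x))
    (fun i => (hint i).const_mul _) ((hw.norm.mul_right _).of_nonneg_of_le
      (fun _ => integral_nonneg fun _ => norm_nonneg _) hnorm)
  simp_rw [integral_const_mul] at this
  rw [this]
  congr with x
  rw [← tsum_mul_right]
  simp_rw [mul_assoc]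


lemma exists_weight_of_forall_ball {E ι : Type*} [MetricSpace E] [ProperSpace E]
    [MeasurableSpace E] [OpensMeasurableSpace E] {μ : Measure E} {Ω : Set E} (hΩ : IsOpen Ω)
    {f : ι → E → ℝ} (hf : ∀ i, Integrable (f i) μ) (hf0 : ∀ i, 0 ≤ f i)
    {Q : ι → ℝ} (hQ : ∀ i, 0 ≤ Q i)
    (hloc : ∀ z r, 0 < r → IsCompact (closure (ball z r)) → closure (ball z r) ⊆ Ω →
      ∃ c > 0, ∀ i, c * ∫ x in ball z r, f i x ∂μ ≤ Q i) :
    ∃ W : E → ℝ, Continuous W ∧ (∀ x ∈ Ω, 0 < W x) ∧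
      ∀ i, ∫ x in Ω, W x * f i x ∂μ ≤ Q i := by
  obtain ⟨T, hT, r, hr, hcover⟩ := hΩ.exists_countable_ball_cover
  have := hT.to_subtype
  choose! c hc hcQ using fun z (hz : z ∈ T) =>
    hloc z (r z) (hr z hz).1 (hr z hz).2.1 (hr z hz).2.2
  obtain ⟨ε, hε, a, hεa, ha⟩ := hT.exists_pos_hasSum_le one_pos
  -- capping `c` at 1 keeps the weights summable
  set w : T → ℝ := fun z => ε z * min 1 (c z)
  have hmin (z : T) : 0 < min 1 (c z) := lt_min one_pos (hc z z.2)
  have hw0 (z : T) : 0 < w z := mul_pos (hε z) (hmin z)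
  have hw : Summable w := hεa.summable.of_nonneg_of_le (fun z => (hw0 z).le) fun z =>
    mul_le_of_le_one_right (hε z).le (min_le_left _ _)
  have hrT (z : T) : 0 < r z := (hr z z.2).1
  refine ⟨fun x => ∑' z : T, w z * tent z.1 (r z) x, continuous_tsum_mul_tent hrT hw,
    fun x hx => tsum_mul_tent_pos hrT hw hw0 (by simpa [iUnion_subtype] using hcover hx),
    fun i => ?_⟩
  have hterm (z : T) : w z * ∫ x in Ω, tent z.1 (r z) x * f i x ∂μ ≤ ε z * Q i := by
    have hball := setIntegral_tent_mul_le hΩ.measurableSet (hrT z)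
      (subset_closure.trans (hr z z.2).2.2) (hf0 i) (hf i).integrableOn
    calc w z * ∫ x in Ω, tent z.1 (r z) x * f i x ∂μ
        ≤ ε z * (min 1 (c z) * ∫ x in ball z.1 (r z), f i x ∂μ) := by
          rw [mul_assoc]
          exact mul_le_mul_of_nonneg_left (mul_le_mul_of_nonneg_left hball (hmin z).le) (hε z).le
      _ ≤ ε z * Q i := by
          refine mul_le_mul_of_nonneg_left ?_ (hε z).le
          exact (mul_le_mul_of_nonneg_right (min_le_right _ _) (integral_nonneg (hf0 i))).trans
            (hcQ z z.2 i)
  have hterm_nonneg (z : T) : 0 ≤ w z * ∫ x in Ω, tent z.1 (r z) x * f i x ∂μ :=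
    mul_nonneg (hw0 z).le (integral_nonneg fun x => mul_nonneg (tent_nonneg _ _ _) (hf0 i x))
  have hεQ : Summable fun z : T => ε z * Q i := hεa.summable.mul_right _
  calc ∫ x in Ω, (∑' z : T, w z * tent z.1 (r z) x) * f i x ∂μ
      = ∑' z : T, w z * ∫ x in Ω, tent z.1 (r z) x * f i x ∂μ :=
        integral_tsum_mul (hf i).restrict (fun z => (continuous_tent _ _).aestronglyMeasurable)
          (fun z x => by
            rw [Real.norm_of_nonneg (tent_nonneg _ _ _)]; exact tent_le_one _ (hrT z) x) hw
    _ ≤ ∑' z : T, ε z * Q i := (hεQ.of_nonneg_of_le hterm_nonneg hterm).tsum_le_tsum hterm hεQ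
    _ = a * Q i := by rw [tsum_mul_right, hεa.tsum_eq]
    _ ≤ Q i := mul_le_of_le_one_left (hQ i) ha

lemma matNorm_nonneg (M : Matrix (Fin n) (Fin n) ℝ) (ξ : Fin n → ℝ) : 0 ≤ matNorm M ξ :=
  Real.sqrt_nonneg _

lemma matNorm_smul (M : Matrix (Fin n) (Fin n) ℝ) (s : ℝ) (ξ : Fin n → ℝ) :
    matNorm M (s • ξ) = |s| * matNorm M ξ := by
  have : matQ M (s • ξ) = (s * s) * matQ M ξ := by
    simp only [matQ, mulVec_smul, smul_dotProduct, dotProduct_smul, smul_eq_mul]; ring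
  rw [matNorm, matNorm, this, Real.sqrt_mul (mul_self_nonneg s), Real.sqrt_mul_self_eq_abs]

lemma grad_const_mul {φ : (Fin n → ℝ) → ℝ} {x : Fin n → ℝ} (hφ : DifferentiableAt ℝ φ x)
    (s : ℝ) : grad (fun y => s * φ y) x = s • grad φ x := by
  ext i
  simp only [grad, fderiv_const_mul hφ, _root_.smul_apply, Pi.smul_apply]

lemma grad_zero : grad (0 : (Fin n → ℝ) → ℝ) = 0 := by
  ext x i
  simp [grad]

lemma IsTest.const_mul {Ω : Set (Fin n → ℝ)} {φ : (Fin n → ℝ) → ℝ} (hφ : IsTest Ω φ) (s : ℝ) :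
    IsTest Ω (fun x => s * φ x) :=
  ⟨contDiff_const.mul hφ.1, hφ.2.1.mul_left, tsupport_mul_subset_right.trans hφ.2.2⟩

lemma IsTest.integrable_abs_rpow {Ω : Set (Fin n → ℝ)} {φ : (Fin n → ℝ) → ℝ} (hφ : IsTest Ω φ)
    {p : ℝ} (hp : 0 < p) (μ : Measure (Fin n → ℝ)) [IsFiniteMeasureOnCompacts μ] :
    Integrable (fun x => |φ x| ^ p) μ :=
  (hφ.1.continuous.abs.rpow_const fun _ => Or.inr hp.le).integrable_of_hasCompactSupport
    (hφ.2.1.abs.rpow_const hp.ne')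

section QForm

variable {p : ℝ} {Ω : Set (Fin n → ℝ)} {A : (Fin n → ℝ) → Matrix (Fin n) (Fin n) ℝ}
  {V : (Fin n → ℝ) → ℝ}

lemma QForm_zero (hp : p ≠ 0) : QForm p Ω A V 0 = 0 := by
  simp [QForm, grad_zero, matNorm, matQ, Real.zero_rpow hp]

lemma QForm_const_mul {φ : (Fin n → ℝ) → ℝ} (hφ : Differentiable ℝ φ) {s : ℝ} (hs : 0 < s) :
    QForm p Ω A V (fun x => s * φ x) = s ^ p * QForm p Ω A V φ := by
  rw [QForm, QForm, ← integral_const_mul]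
  congr 1 with x
  rw [grad_const_mul (hφ x), matNorm_smul, abs_mul, abs_of_pos hs,
    Real.mul_rpow hs.le (matNorm_nonneg _ _), Real.mul_rpow hs.le (abs_nonneg _)]
  ring

lemma mul_setIntegral_le_QForm_of_normalized {B : Set (Fin n → ℝ)} {c : ℝ} (hp : p ≠ 0)
    (hc : ∀ φ, IsTest Ω φ → (∫ x in B, |φ x| ^ p) = 1 → c ≤ QForm p Ω A V φ)
    {φ : (Fin n → ℝ) → ℝ} (hφ : IsTest Ω φ) (ht : 0 < ∫ x in B, |φ x| ^ p) :
    c * ∫ x in B, |φ x| ^ p ≤ QForm p Ω A V φ := by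
  set t := ∫ x in B, |φ x| ^ p
  set s := t ^ (-p⁻¹)
  have hs : 0 < s := Real.rpow_pos_of_pos ht _
  have hsp : s ^ p = t⁻¹ := by
    rw [← Real.rpow_mul ht.le, neg_mul, inv_mul_cancel₀ hp, Real.rpow_neg_one]
  have hnormalized : (∫ x in B, |s * φ x| ^ p) = 1 := by
    simp_rw [abs_mul, abs_of_pos hs, Real.mul_rpow hs.le (abs_nonneg _)]
    rw [integral_const_mul, hsp, inv_mul_cancel₀ ht.ne']
  have := hc _ (hφ.const_mul s) hnormalized
  rwa [QForm_const_mul (hφ.1.differentiable (by simp)) hs, hsp, le_inv_mul_iff₀ ht, mul_comm]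
    at this

/-- `c_B > 0` for every nonempty open `B ⋐ Ω`, with `c_B` unfolded into a positive lower bound. -/
def CBPos (p : ℝ) (Ω : Set (Fin n → ℝ)) (A : (Fin n → ℝ) → Matrix (Fin n) (Fin n) ℝ)
    (V : (Fin n → ℝ) → ℝ) : Prop :=
  ∀ B : Set (Fin n → ℝ), IsOpen B → B.Nonempty → IsCompact (closure B) → closure B ⊆ Ω →
    ∃ c > (0:ℝ), ∀ φ : (Fin n → ℝ) → ℝ, IsTest Ω φ →
      (∫ x in B, |φ x| ^ p) = 1 → c ≤ QForm p Ω A V φ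

lemma CBPos.qNonneg (hcB : CBPos p Ω A V) (hp : 0 < p) : QNonneg p Ω A V := by
  intro φ hφ
  by_cases hφ0 : φ = 0
  · rw [hφ0, QForm_zero hp.ne']
  obtain ⟨x₀, hx₀⟩ := Function.ne_iff.1 hφ0
  obtain ⟨r, hr, hBc, hBφ⟩ :=
    exists_ball_isCompact_closure_subset (hφ.1.continuous.isOpen_support.mem_nhds hx₀)
  obtain ⟨c, hc, hcQ⟩ := hcB _ isOpen_ball (nonempty_ball.2 hr) hBc
    (hBφ.trans ((subset_tsupport φ).trans hφ.2.2))
  have ht : 0 < ∫ x in ball x₀ r, |φ x| ^ p := by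
    rw [setIntegral_pos_iff_support_of_nonneg_ae (ae_of_all _ fun _ => by positivity)
      (hφ.integrable_abs_rpow hp _).integrableOn]
    have : Function.support (fun x => |φ x| ^ p) ∩ ball x₀ r = ball x₀ r :=
      inter_eq_right.2 fun x hx =>
        (Real.rpow_pos_of_pos (abs_pos.2 (hBφ (subset_closure hx))) p).ne'
    rw [this]
    exact measure_ball_pos _ _ hr
  exact (mul_pos hc ht).le.trans (mul_setIntegral_le_QForm_of_normalized hp.ne' hcQ hφ ht)

lemma CBPos.exists_mul_setIntegral_le (hcB : CBPos p Ω A V) (hp : 0 < p)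
    {B : Set (Fin n → ℝ)} (hB : IsOpen B) (hBne : B.Nonempty) (hBc : IsCompact (closure B))
    (hBΩ : closure B ⊆ Ω) :
    ∃ c > 0, ∀ φ, IsTest Ω φ → c * ∫ x in B, |φ x| ^ p ≤ QForm p Ω A V φ := by
  obtain ⟨c, hc, hcQ⟩ := hcB B hB hBne hBc hBΩ
  refine ⟨c, hc, fun φ hφ => ?_⟩
  rcases (integral_nonneg fun x => by positivity : 0 ≤ ∫ x in B, |φ x| ^ p).eq_or_lt
    with h0 | hpos
  · rw [← h0, mul_zero]
    exact hcB.qNonneg hp φ hφ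
  · exact mul_setIntegral_le_QForm_of_normalized hp.ne' hcQ hφ hpos

end QForm

theorem exists_weight_of_cB_pos_general
    (n : ℕ) (p : ℝ) (hp : 1 < p)
    (Ω : Set (Fin n → ℝ)) (hΩo : IsOpen Ω)
    (A : (Fin n → ℝ) → Matrix (Fin n) (Fin n) ℝ)
    (V : (Fin n → ℝ) → ℝ)
    (hcB : ∀ B : Set (Fin n → ℝ), IsOpen B → B.Nonempty → IsCompact (closure B) →
        closure B ⊆ Ω →
      ∃ c > (0:ℝ), ∀ φ : (Fin n → ℝ) → ℝ, IsTest Ω φ →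
        (∫ x in B, |φ x| ^ p) = 1 → c ≤ QForm p Ω A V φ) :
    ∃ W : (Fin n → ℝ) → ℝ, ContinuousOn W Ω ∧ (∀ x ∈ Ω, 0 < W x) ∧
      ∀ φ : (Fin n → ℝ) → ℝ, IsTest Ω φ →
        (∫ x in Ω, W x * |φ x| ^ p) ≤ QForm p Ω A V φ := by
  have hp0 : 0 < p := by linarith
  have hcB : CBPos p Ω A V := hcB
  obtain ⟨W, hW, hWpos, hWQ⟩ := exists_weight_of_forall_ball (μ := volume) hΩo
    (f := fun φ : {φ // IsTest Ω φ} => fun x => |φ.1 x| ^ p)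
    (fun φ => φ.2.integrable_abs_rpow hp0 _) (fun _ _ => by positivity)
    (fun φ => hcB.qNonneg hp0 φ.1 φ.2) fun z r hr hBc hBΩ => by
      obtain ⟨c, hc, hcQ⟩ :=
        hcB.exists_mul_setIntegral_le hp0 isOpen_ball (nonempty_ball.2 hr) hBc hBΩ
      exact ⟨c, hc, fun φ => hcQ φ.1 φ.2⟩
  exact ⟨W, hW.continuousOn, hWpos, fun φ hφ => hWQ ⟨φ, hφ⟩⟩

/-- If `c_B > 0` for every nonempty open `B ⋐ Ω`, then there is a continuous positive weight
`W` on `Ω` with `Q_{A,V}(φ) ≥ ∫_Ω W |φ|^p dx` for all `φ ∈ C_c^∞(Ω)`. -/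
theorem exists_weight_of_cB_pos
    (n : ℕ) (hn : 2 ≤ n) (p : ℝ) (hp : 1 < p)
    (Ω : Set (Fin n → ℝ)) (hΩo : IsOpen Ω) (hΩc : IsConnected Ω)
    (A : (Fin n → ℝ) → Matrix (Fin n) (Fin n) ℝ) (hAmeas : MeasurableMat A)
    (hA : LocUnifPD Ω A)
    (V : (Fin n → ℝ) → ℝ) (hV : LinfLoc Ω V)
    (hcB : ∀ B : Set (Fin n → ℝ), IsOpen B → B.Nonempty → IsCompact (closure B) →
        closure B ⊆ Ω →
      ∃ c > (0:ℝ), ∀ φ : (Fin n → ℝ) → ℝ, IsTest Ω φ →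
        (∫ x in B, |φ x| ^ p) = 1 → c ≤ QForm p Ω A V φ) :
    ∃ W : (Fin n → ℝ) → ℝ, ContinuousOn W Ω ∧ (∀ x ∈ Ω, 0 < W x) ∧
      ∀ φ : (Fin n → ℝ) → ℝ, IsTest Ω φ →
        (∫ x in Ω, W x * |φ x| ^ p) ≤ QForm p Ω A V φ :=
  exists_weight_of_cB_pos_general n p hp Ω hΩo A V hcB

end
end
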